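/- arXiv:2603.25345 — 2 statements merged into one kernel-verified Lean document; each statement's English description precedes it below -/
import Mathlib

section
/- Let A be a positive semidefinite complex matrix that can be decomposed as A = ∑_{k=1}^{N} B_k, where each B_k is positive semidefinite, and let U be a unitary matrix of the same size. If A·U = A, then B_k·U = B_k for all k ∈ {1, …, N}. -/
open Matrix ComplexOrder BigOperators

/-! Each `Bₖ` is PSD, so `x† A x = ∑ₖ x† Bₖ x = 0` forces every `x† Bₖ x`, hence every `Bₖ x`, to
vanish: `ker A ⊆ ker Bₖ`. The columns of `U - 1` lie in `ker A`, so `Bₖ (U - 1) = 0`. -/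

namespace Matrix

variable {ι m n p α 𝕜 : Type*}

theorem PosSemidef.mulVec_eq_zero_of_sum_mulVec_eq_zero [Fintype n] [RCLike 𝕜] {s : Finset ι}
    {B : ι → Matrix n n 𝕜} (hB : ∀ k ∈ s, (B k).PosSemidef) {x : n → 𝕜}
    (hx : (∑ k ∈ s, B k) *ᵥ x = 0) {k : ι} (hk : k ∈ s) : B k *ᵥ x = 0 := by
  have hquad : ∑ j ∈ s, star x ⬝ᵥ B j *ᵥ x = 0 := by
    rw [← dotProduct_sum, ← sum_mulVec, hx, dotProduct_zero]
  rw [Finset.sum_eq_zero_iff_of_nonneg fun j hj => (hB j hj).dotProduct_mulVec_nonneg x] at hquad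
  exact ((hB k hk).dotProduct_mulVec_zero_iff x).mp (hquad k hk)

theorem mul_eq_zero_of_forall_mulVec_eq_zero_imp [Fintype n] [Fintype p] [Semiring α]
    {A B : Matrix m n α} {M : Matrix n p α} (hAB : ∀ x, A *ᵥ x = 0 → B *ᵥ x = 0)
    (hM : A * M = 0) : B * M = 0 := by
  classical
  refine ext_of_mulVec_single fun j => ?_
  rw [← mulVec_mulVec, hAB _ (by rw [mulVec_mulVec, hM, zero_mulVec]), zero_mulVec]

end Matrix

theorem psd_sum_unitary_invariance_general {n N : ℕ}
    (A : Matrix (Fin n) (Fin n) ℂ) (B : Fin N → Matrix (Fin n) (Fin n) ℂ)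
    (U : Matrix (Fin n) (Fin n) ℂ)
    (hB : ∀ k, (B k).PosSemidef)
    (hsum : A = ∑ k, B k)
    (hAU : A * U = A) :
    ∀ k, B k * U = B k := by
  intro k
  have hA : A * (U - 1) = 0 := by rw [mul_sub, hAU, mul_one, sub_self]
  have hBk : B k * (U - 1) = 0 :=
    mul_eq_zero_of_forall_mulVec_eq_zero_imp
      (fun x hx => PosSemidef.mulVec_eq_zero_of_sum_mulVec_eq_zero (fun j _ => hB j)
        (hsum ▸ hx) (Finset.mem_univ k)) hA
  rwa [mul_sub, mul_one, sub_eq_zero] at hBk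

/-- If a positive semidefinite matrix `A` decomposes as a sum of
positive semidefinite matrices `B k`, `U` is unitary, and `A·U = A`, then `B k·U = B k`
for every `k`. -/
theorem psd_sum_unitary_invariance {n N : ℕ}
    (A : Matrix (Fin n) (Fin n) ℂ) (B : Fin N → Matrix (Fin n) (Fin n) ℂ)
    (U : Matrix (Fin n) (Fin n) ℂ)
    (hA : A.PosSemidef) (hB : ∀ k, (B k).PosSemidef)
    (hsum : A = ∑ k, B k)
    (hU : U * Uᴴ = 1 ∧ Uᴴ * U = 1)
    (hAU : A * U = A) :
    ∀ k, B k * U = B k :=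
  psd_sum_unitary_invariance_general A B U hB hsum hAU
end

section
/- Let n ≥ 2 and let ρ be a density matrix on (ℂ^{d})^{⊗n} that is invariant under conjugation by the unitary implementing any transposition of two tensor factors. Suppose there is a bipartition (K₁, K₂) of {1, …, n} into two nonempty disjoint subsets such that ρ factorises across it, i.e., ρ equals (up to the unitary reordering of tensor factors associated with the bipartition) the tensor product of its marginal on the factors in K₁ with its marginal on the factors in K₂. Then ρ = σ^{⊗n}, where σ is the single-party marginal of ρ (which is the same density matrix on ℂ^{d} for every party). -/
/-!
By permutation invariance the factorisation across `K` transports to every cut `T` with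
`#T = #K`. If `ρ = A ⊙ B` with `A` depending only on the parties in `T` and `B` only on those in
`Tᶜ`, tracing out any set of parties splits into a product of partial traces of `A` and `B`;
comparing the marginals on `S`, `S ∩ T`, `S \ T` and `∅` gives
`margOn S ρ · Tr ρ = margOn (S ∩ T) ρ · margOn (S \ T) ρ`. As `0 < #K < n`, any two parties are
separated by such a cut, so repeated splitting reduces every marginal to single-party marginals,
and these all coincide by symmetry.
-/

open Matrix ComplexOrder BigOperators

noncomputable section

/-- Density matrix: positive semidefinite with unit trace. -/
def IsDensity {ι : Type*} [Fintype ι] (ρ : Matrix ι ι ℂ) : Prop :=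
  ρ.PosSemidef ∧ ρ.trace = 1

/-- The marginal of an `n`-partite matrix on the parties in `K` (tracing out the
complement of `K`), written as a function of full index tuples: it depends only on the
restrictions of `u`, `v` to `K`. -/
def margOn {n d : ℕ} (K : Finset (Fin n))
    (ρ : Matrix (Fin n → Fin d) (Fin n → Fin d) ℂ) (u v : Fin n → Fin d) : ℂ :=
  ∑ w : {i // i ∉ K} → Fin d,
    ρ (fun i => if h : i ∈ K then u i else w ⟨i, h⟩)
      (fun i => if h : i ∈ K then v i else w ⟨i, h⟩)

open Finset

section Fill

variable {ι α : Type*} [DecidableEq ι]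

def fillOut (K : Finset ι) (u : ι → α) (w : {i // i ∉ K} → α) : ι → α :=
  fun i => if h : i ∈ K then u i else w ⟨i, h⟩

variable {K : Finset ι} {u : ι → α} {w : {i // i ∉ K} → α} {i : ι}

lemma fillOut_of_mem (h : i ∈ K) : fillOut K u w i = u i := dif_pos h

lemma fillOut_of_notMem (h : i ∉ K) : fillOut K u w i = w ⟨i, h⟩ := dif_neg h

lemma fillOut_congr {u' : ι → α} (h : ∀ i ∈ K, u i = u' i) : fillOut K u w = fillOut K u' w :=
  funext fun i => by by_cases hi : i ∈ K <;> simp [fillOut, hi, h]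

end Fill

def DependsOnlyOn {ι α R : Type*} (F : Matrix (ι → α) (ι → α) R) (T : Finset ι) : Prop :=
  ∀ ⦃u v u' v'⦄, (∀ i ∈ T, u i = u' i) → (∀ i ∈ T, v i = v' i) → F u v = F u' v'

def IsPermInvariant {ι α R : Type*} (ρ : Matrix (ι → α) (ι → α) R) : Prop :=
  ∀ (π : Equiv.Perm ι) u v, ρ (u ∘ π) (v ∘ π) = ρ u v

lemma isPermInvariant_of_swap {ι α R : Type*} [Finite ι] [DecidableEq ι]
    {ρ : Matrix (ι → α) (ι → α) R}
    (h : ∀ i j : ι, ∀ u v, ρ (u ∘ Equiv.swap i j) (v ∘ Equiv.swap i j) = ρ u v) :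
    IsPermInvariant ρ := by
  intro π
  induction π using Equiv.Perm.swap_induction_on with
  | one => exact fun u v => rfl
  | swap_mul f i j _ ih => exact fun u v => (ih _ _).trans (h i j u v)

lemma Finset.eq_prod_of_separating_split {ι M : Type*} [DecidableEq ι] [CommMonoid M]
    {m : Finset ι → M} {g : ι → M} (hsingle : ∀ i, m {i} = g i)
    (hsplit : ∀ i j, i ≠ j → ∃ T : Finset ι, i ∈ T ∧ j ∉ T ∧ ∀ S, m S = m (S ∩ T) * m (S \ T))
    {S : Finset ι} (hS : S.Nonempty) : m S = ∏ i ∈ S, g i := by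
  induction hS using Finset.Nonempty.strong_induction with
  | h₀ i => rw [hsingle, prod_singleton]
  | @h₁ S hS ih =>
    obtain ⟨i, hi, j, hj, hij⟩ := hS
    obtain ⟨T, hiT, hjT, hT⟩ := hsplit i j hij
    have hinter : S ∩ T ⊂ S :=
      (ssubset_iff_of_subset inter_subset_left).2 ⟨j, hj, fun h => hjT (mem_inter.1 h).2⟩
    have hsdiff : S \ T ⊂ S :=
      (ssubset_iff_of_subset sdiff_subset).2 ⟨i, hi, fun h => (mem_sdiff.1 h).2 hiT⟩
    rw [hT, ← prod_inter_mul_prod_sdiff S T, ih _ ⟨i, mem_inter.2 ⟨hi, hiT⟩⟩ hinter,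
      ih _ ⟨j, mem_sdiff.2 ⟨hj, hjT⟩⟩ hsdiff]

lemma Finset.exists_card_eq_mem_notMem {ι : Type*} [Fintype ι] [DecidableEq ι] {k : ℕ}
    (hk₀ : 0 < k) (hk : k < Fintype.card ι) {i j : ι} (hij : i ≠ j) :
    ∃ T : Finset ι, #T = k ∧ i ∈ T ∧ j ∉ T := by
  obtain ⟨T, hiT, hTj, hT⟩ := exists_subsuperset_card_eq (n := k)
    (singleton_subset_iff.2 (mem_erase.2 ⟨hij, mem_univ i⟩)) (by rw [card_singleton]; omega)
    (by rw [card_erase_of_mem (mem_univ j), card_univ]; omega)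
  exact ⟨T, hT, singleton_subset_iff.1 hiT, fun h => (mem_erase.1 (hTj h)).1 rfl⟩

section Marginals

variable {n d : ℕ}

lemma margOn_apply (K : Finset (Fin n)) (F : Matrix (Fin n → Fin d) (Fin n → Fin d) ℂ)
    (u v : Fin n → Fin d) : margOn K F u v = ∑ w, F (fillOut K u w) (fillOut K v w) := rfl

lemma dependsOnlyOn_margOn (K : Finset (Fin n)) (F : Matrix (Fin n → Fin d) (Fin n → Fin d) ℂ) :
    DependsOnlyOn (margOn K F) K := by
  intro u v u' v' hu hv
  simp only [margOn_apply, fillOut_congr hu, fillOut_congr hv]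

lemma margOn_univ (F : Matrix (Fin n → Fin d) (Fin n → Fin d) ℂ) : margOn univ F = F := by
  ext u v
  have hfill : ∀ (x : Fin n → Fin d) w, fillOut univ x w = x :=
    fun x w => funext fun i => fillOut_of_mem (mem_univ i)
  simp [margOn_apply, hfill]

theorem margOn_hadamard_of_dependsOnlyOn {F G : Matrix (Fin n → Fin d) (Fin n → Fin d) ℂ}
    {T : Finset (Fin n)} (hF : DependsOnlyOn F T) (hG : DependsOnlyOn G Tᶜ) (S : Finset (Fin n))
    (u v : Fin n → Fin d) :
    margOn S (F ⊙ G) u v = margOn (S ∪ Tᶜ) F u v * margOn (S ∪ T) G u v := by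
  let e : ({i // i ∉ S} → Fin d) ≃ ({i // i ∉ S ∪ Tᶜ} → Fin d) × ({i // i ∉ S ∪ T} → Fin d) :=
    (Equiv.piEquivPiSubtypeProd (fun j : {i // i ∉ S} => j.1 ∈ T) _).trans <|
      .prodCongr
        (.arrowCongr ((Equiv.subtypeSubtypeEquivSubtypeInter (· ∉ S) (· ∈ T)).trans
          (Equiv.subtypeEquivRight fun i => by simp)) (.refl _))
        (.arrowCongr ((Equiv.subtypeSubtypeEquivSubtypeInter (· ∉ S) (· ∉ T)).trans
          (Equiv.subtypeEquivRight fun i => by simp)) (.refl _))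
  simp only [margOn_apply, sum_mul_sum, ← Fintype.sum_prod_type']
  refine Fintype.sum_equiv e _ _ fun w => ?_
  have hT : ∀ x i, i ∈ T → fillOut S x w i = fillOut (S ∪ Tᶜ) x (e w).1 i := by
    intro x i hi
    by_cases hiS : i ∈ S
    · rw [fillOut_of_mem hiS, fillOut_of_mem (mem_union_left _ hiS)]
    · rw [fillOut_of_notMem hiS, fillOut_of_notMem (by simp [hiS, hi])]; rfl
  have hTc : ∀ x i, i ∈ Tᶜ → fillOut S x w i = fillOut (S ∪ T) x (e w).2 i := by
    intro x i hi
    by_cases hiS : i ∈ S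
    · rw [fillOut_of_mem hiS, fillOut_of_mem (mem_union_left _ hiS)]
    · rw [fillOut_of_notMem hiS, fillOut_of_notMem (by simp_all)]; rfl
  rw [hadamard_apply, hF (hT u) (hT v), hG (hTc u) (hTc v)]

lemma margOn_empty (F : Matrix (Fin n → Fin d) (Fin n → Fin d) ℂ) (u v : Fin n → Fin d) :
    margOn ∅ F u v = F.trace := by
  let e : ({i // i ∉ (∅ : Finset (Fin n))} → Fin d) ≃ (Fin n → Fin d) :=
    .arrowCongr (Equiv.subtypeUnivEquiv fun i => notMem_empty i) (.refl _)
  have hfill : ∀ x w, fillOut ∅ x w = e w := fun x w => funext fun i => fillOut_of_notMem _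
  simp only [margOn_apply, hfill]
  exact Fintype.sum_equiv e _ _ fun _ => rfl

theorem margOn_inter_mul_margOn_sdiff_of_eq_hadamard
    {ρ A B : Matrix (Fin n → Fin d) (Fin n → Fin d) ℂ} {T : Finset (Fin n)} (hρ : ρ = A ⊙ B)
    (hA : DependsOnlyOn A T) (hB : DependsOnlyOn B Tᶜ)
    (S : Finset (Fin n)) (u v : Fin n → Fin d) :
    margOn (S ∩ T) ρ u v * margOn (S \ T) ρ u v = margOn S ρ u v * ρ.trace := by
  have hsplit := fun S => margOn_hadamard_of_dependsOnlyOn hA hB S u v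
  have h₁ : S ∩ T ∪ Tᶜ = S ∪ Tᶜ := by ext; simp; tauto
  have h₂ : S \ T ∪ Tᶜ = Tᶜ := union_eq_right.2 fun i hi => mem_compl.2 (mem_sdiff.1 hi).2
  rw [← margOn_empty ρ u v, hρ, hsplit, hsplit, hsplit, hsplit, h₁, h₂,
    union_eq_right.2 inter_subset_right, sdiff_union_self_eq_union, empty_union, empty_union]
  ring

def FactorizesAcross (ρ : Matrix (Fin n → Fin d) (Fin n → Fin d) ℂ) (T : Finset (Fin n)) : Prop :=
  ∀ u v, ρ u v = margOn T ρ u v * margOn Tᶜ ρ u v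

variable {ρ : Matrix (Fin n → Fin d) (Fin n → Fin d) ℂ}

theorem FactorizesAcross.margOn_eq_mul (htr : ρ.trace = 1) {T : Finset (Fin n)}
    (h : FactorizesAcross ρ T) (S : Finset (Fin n)) (u v : Fin n → Fin d) :
    margOn S ρ u v = margOn (S ∩ T) ρ u v * margOn (S \ T) ρ u v := by
  rw [margOn_inter_mul_margOn_sdiff_of_eq_hadamard (Matrix.ext h) (dependsOnlyOn_margOn T ρ)
    (dependsOnlyOn_margOn Tᶜ ρ), htr, mul_one]

lemma margOn_map_perm {π : Equiv.Perm (Fin n)} (hπ : ∀ u v, ρ (u ∘ π) (v ∘ π) = ρ u v)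
    (K : Finset (Fin n)) (u v : Fin n → Fin d) :
    margOn (K.map π.toEmbedding) ρ u v = margOn K ρ (u ∘ π) (v ∘ π) := by
  let e : {i // i ∉ K} ≃ {i // i ∉ K.map π.toEmbedding} := π.subtypeEquiv fun i => by simp
  have hfill : ∀ (x : Fin n → Fin d) w,
      fillOut (K.map π.toEmbedding) x (w ∘ e.symm) ∘ π = fillOut K (x ∘ π) w := by
    intro x w
    funext i
    by_cases hi : i ∈ K
    · simp [fillOut, hi]
    · simp [fillOut, hi, e]
  simp only [margOn_apply]
  exact (Fintype.sum_equiv (e.arrowCongr (.refl _)) _ _ fun w =>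
    (congrArg₂ ρ (hfill u w) (hfill v w)).symm.trans (hπ _ _)).symm

theorem FactorizesAcross.map_perm {π : Equiv.Perm (Fin n)}
    (hπ : ∀ u v, ρ (u ∘ π) (v ∘ π) = ρ u v) {K : Finset (Fin n)} (h : FactorizesAcross ρ K) :
    FactorizesAcross ρ (K.map π.toEmbedding) := by
  intro u v
  have hcompl : (K.map π.toEmbedding)ᶜ = Kᶜ.map π.toEmbedding := by ext; simp
  rw [hcompl, margOn_map_perm hπ, margOn_map_perm hπ, ← h, hπ]

lemma margOn_singleton (hρ : IsPermInvariant ρ) (i j : Fin n) (u v : Fin n → Fin d) :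
    margOn {i} ρ u v = margOn {j} ρ (fun _ => u i) (fun _ => v i) := by
  have hmap : ({j} : Finset (Fin n)).map (Equiv.swap j i).toEmbedding = {i} := by simp
  rw [← hmap, margOn_map_perm (hρ _)]
  exact dependsOnlyOn_margOn _ _ (by simp) (by simp)

theorem FactorizesAcross.exists_separating (hρ : IsPermInvariant ρ) (htr : ρ.trace = 1)
    {K : Finset (Fin n)} (h : FactorizesAcross ρ K) (hK₁ : K.Nonempty) (hK₂ : K ≠ univ)
    {i j : Fin n} (hij : i ≠ j) :
    ∃ T, i ∈ T ∧ j ∉ T ∧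
      ∀ S u v, margOn S ρ u v = margOn (S ∩ T) ρ u v * margOn (S \ T) ρ u v := by
  obtain ⟨T, hT, hiT, hjT⟩ :=
    exists_card_eq_mem_notMem hK₁.card_pos ((card_lt_iff_ne_univ K).2 hK₂) hij
  obtain ⟨π, rfl⟩ := Equiv.Perm.exists_map_finset_eq K T hT.symm
  exact ⟨_, hiT, hjT, (h.map_perm (hρ π)).margOn_eq_mul htr⟩

end Marginals

theorem symmetric_product_implies_full_product_general {n d : ℕ}
    (ρ : Matrix (Fin n → Fin d) (Fin n → Fin d) ℂ)
    (hρ : IsDensity ρ)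
    (hperm : ∀ i j : Fin n, ∀ u v : Fin n → Fin d,
      ρ (u ∘ (Equiv.swap i j)) (v ∘ (Equiv.swap i j)) = ρ u v)
    (K : Finset (Fin n)) (hK₁ : K.Nonempty) (hK₂ : K ≠ Finset.univ)
    (hfact : ∀ u v, ρ u v = margOn K ρ u v * margOn Kᶜ ρ u v) :
    ∃ σ : Matrix (Fin d) (Fin d) ℂ,
      (∀ i : Fin n, ∀ a b : Fin d, margOn {i} ρ (fun _ => a) (fun _ => b) = σ a b) ∧
      (∀ u v : Fin n → Fin d, ρ u v = ∏ i, σ (u i) (v i)) := by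
  have hinv : IsPermInvariant ρ := isPermInvariant_of_swap hperm
  have hsep {i j : Fin n} (hij : i ≠ j) :=
    FactorizesAcross.exists_separating hinv hρ.2 hfact hK₁ hK₂ hij
  obtain ⟨k, -⟩ := hK₁
  let σ : Matrix (Fin d) (Fin d) ℂ := Matrix.of fun a b => margOn {k} ρ (fun _ => a) (fun _ => b)
  have hσ : ∀ i u v, margOn {i} ρ u v = σ (u i) (v i) := fun i u v => margOn_singleton hinv i k u v
  refine ⟨σ, fun i a b => hσ i _ _, fun u v => ?_⟩
  rw [← margOn_univ ρ]
  refine eq_prod_of_separating_split (m := fun S => margOn S ρ u v) (fun i => hσ i u v)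
    (fun i j hij => ?_) ⟨k, mem_univ k⟩
  obtain ⟨T, hiT, hjT, hT⟩ := hsep hij
  exact ⟨T, hiT, hjT, fun S => hT S u v⟩

/-- A permutation-invariant `n`-partite density matrix that factorises
across some nontrivial bipartition `(K, Kᶜ)` is a tensor power `σ^{⊗n}` of its
single-party marginal `σ` (which is the same for every party). -/
theorem symmetric_product_implies_full_product {n d : ℕ} (hn : 2 ≤ n)
    (ρ : Matrix (Fin n → Fin d) (Fin n → Fin d) ℂ)
    (hρ : IsDensity ρ)
    (hperm : ∀ i j : Fin n, ∀ u v : Fin n → Fin d,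
      ρ (u ∘ (Equiv.swap i j)) (v ∘ (Equiv.swap i j)) = ρ u v)
    (K : Finset (Fin n)) (hK₁ : K.Nonempty) (hK₂ : K ≠ Finset.univ)
    (hfact : ∀ u v, ρ u v = margOn K ρ u v * margOn Kᶜ ρ u v) :
    ∃ σ : Matrix (Fin d) (Fin d) ℂ,
      (∀ i : Fin n, ∀ a b : Fin d, margOn {i} ρ (fun _ => a) (fun _ => b) = σ a b) ∧
      (∀ u v : Fin n → Fin d, ρ u v = ∏ i, σ (u i) (v i)) :=
  symmetric_product_implies_full_product_general ρ hρ hperm K hK₁ hK₂ hfact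
end
end
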